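/- Let Φ be an irreducible reduced root system of rank ℓ. Suppose (λ,μ,ν) is a triple of dominant weights such that whenever λ',μ' are dominant with λ' ≤ λ, μ' ≤ μ, ν ≤ λ'+μ', one has λ'=λ and μ'=μ, and moreover ν + Σ_{i=1}^ℓ αᵢ ≤ λ+μ. Then for β = λ+μ−ν, the quantity ht₀⁺(β) is at most 2, where ht₀⁺(β) is defined as follows: write β = Σ aᵢωᵢ in fundamental weights; if Φ is not of type F₄, ht₀⁺(β) = Σ_{i∈I₀, aᵢ>0} aᵢ with I₀ the maximal simply-laced subsystem of the Dynkin diagram containing node 1; if Φ is of type F₄, ht₀⁺(β) is the maximum of Σ_{i∈{1,2}, aᵢ>0} aᵢ and Σ_{i∈{3,4}, aᵢ>0} aᵢ. -/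

import Mathlib

open scoped RealInnerProductSpace

noncomputable section

variable {E : Type*} [NormedAddCommGroup E] [InnerProductSpace ℝ E]

/-- The pairing `⟨x, α∨⟩ = 2(x,α)/(α,α)`. -/
def cpair (x α : E) : ℝ := 2 * ⟪x, α⟫ / ⟪α, α⟫

/-- Reflection in the hyperplane orthogonal to `α`. -/
def wrefl (α x : E) : E := x - cpair x α • α

/-- An irreducible reduced root system with a chosen base `simple : Fin ℓ → E`. -/
structure RootSystemData (ℓ : ℕ) (E : Type*) [NormedAddCommGroup E]
    [InnerProductSpace ℝ E] where
  roots : Finset E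
  simple : Fin ℓ → E
  simple_mem : ∀ i, simple i ∈ roots
  root_ne_zero : ∀ α ∈ roots, α ≠ 0
  reduced : ∀ α ∈ roots, (2 : ℝ) • α ∉ roots
  cpair_int : ∀ α ∈ roots, ∀ β ∈ roots, ∃ n : ℤ, cpair β α = (n : ℝ)
  reflect_mem : ∀ α ∈ roots, ∀ β ∈ roots, wrefl α β ∈ roots
  simple_indep : LinearIndependent ℝ simple
  root_decomp : ∀ α ∈ roots,
    (∃ c : Fin ℓ → ℕ, α = ∑ i, (c i : ℝ) • simple i) ∨
    (∃ c : Fin ℓ → ℕ, α = -∑ i, (c i : ℝ) • simple i)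
  irred : ∀ S : Finset (Fin ℓ), S.Nonempty →
    (∀ i ∈ S, ∀ j ∉ S, ⟪simple i, simple j⟫ = 0) → S = Finset.univ

namespace RootSystemData

variable {ℓ : ℕ} (R : RootSystemData ℓ E)

/-- Integral weights. -/
def IsIntegral (x : E) : Prop := ∀ α ∈ R.roots, ∃ n : ℤ, cpair x α = (n : ℝ)

/-- Dominant (integral) weights. -/
def IsDominant (x : E) : Prop :=
  R.IsIntegral x ∧ ∀ i, 0 ≤ cpair x (R.simple i)

/-- The dominant order: `R.wle μ λ` means `μ ≤ λ`, i.e. `λ - μ` is a nonnegative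
integer combination of the simple roots. -/
def wle (μ lam : E) : Prop :=
  ∃ c : Fin ℓ → ℕ, lam - μ = ∑ i, (c i : ℝ) • R.simple i

/-- Minuscule weights: nonzero dominant weights all of whose pairings with roots
lie in `{0, 1, -1}`. -/
def IsMinuscule (x : E) : Prop :=
  R.IsDominant x ∧ x ≠ 0 ∧
  ∀ α ∈ R.roots, cpair x α = 0 ∨ cpair x α = 1 ∨ cpair x α = -1

/-- `y` lies in the Weyl group orbit of `x`. -/
def InWeylOrbit (x y : E) : Prop :=
  ∃ l : List E, (∀ α ∈ l, α ∈ R.roots) ∧ y = l.foldr wrefl x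

/-- `R.IsDualOf μ λ` expresses `μ = -w₀ λ`: `μ` is the dominant element of the
Weyl orbit of `-λ`. -/
def IsDualOf (μ lam : E) : Prop := R.IsDominant μ ∧ R.InWeylOrbit (-lam) μ

/-- Low triples of dominant weights. -/
def LowTriple (lam mu nu : E) : Prop :=
  R.IsDominant lam ∧ R.IsDominant mu ∧ R.IsDominant nu ∧
  (∀ lam' mu' : E, R.IsDominant lam' → R.IsDominant mu' →
    R.wle lam' lam → R.wle mu' mu → R.wle nu (lam' + mu') → lam' = lam ∧ mu' = mu) ∧
  R.wle (nu + ∑ i, R.simple i) (lam + mu)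

/-- Covering relation in the poset of dominant weights. -/
def Covers (lam mu : E) : Prop :=
  R.IsDominant lam ∧ R.IsDominant mu ∧ R.wle mu lam ∧ mu ≠ lam ∧
  ∀ η, R.IsDominant η → R.wle mu η → R.wle η lam → η = mu ∨ η = lam

/-- A root of the subsystem `Φ_I` generated by the simple roots indexed by `I`. -/
def IsRootOf (I : Finset (Fin ℓ)) (β : E) : Prop :=
  β ∈ R.roots ∧ ∃ c : Fin ℓ → ℤ, (∀ i, c i ≠ 0 → i ∈ I) ∧
    β = ∑ i, (c i : ℝ) • R.simple i

/-- A short root of `Φ_I`. -/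
def IsShortRootOf (I : Finset (Fin ℓ)) (β : E) : Prop :=
  R.IsRootOf I β ∧ ∀ γ, R.IsRootOf I γ → ⟪β, β⟫ ≤ ⟪γ, γ⟫

/-- `θ` is the highest short root of `Φ_I`. -/
def IsHighestShortRoot (I : Finset (Fin ℓ)) (θ : E) : Prop :=
  R.IsShortRootOf I θ ∧ ∀ γ, R.IsShortRootOf I γ → R.wle γ θ

/-- `I` indexes a connected (i.e. irreducible) subdiagram of the Dynkin diagram. -/
def Connected (I : Finset (Fin ℓ)) : Prop :=
  I.Nonempty ∧ ∀ S ⊆ I, S.Nonempty →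
    (∀ i ∈ S, ∀ j ∈ I, j ∉ S → ⟪R.simple i, R.simple j⟫ = 0) → S = I

/-- `I` is of type A: the Cartan matrix of `Φ_I` is that of a type `A` chain. -/
def IsTypeASub (I : Finset (Fin ℓ)) : Prop :=
  ∃ e : Fin I.card ≃ {i // i ∈ I}, ∀ a b : Fin I.card,
    cpair (R.simple (e b).1) (R.simple (e a).1) =
      if a = b then 2
      else if (a : ℕ) + 1 = (b : ℕ) ∨ (b : ℕ) + 1 = (a : ℕ) then -1 else 0

/-- The subdiagram indexed by `I` is simply laced. -/
def SimplyLaced (I : Finset (Fin ℓ)) : Prop :=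
  ∀ i ∈ I, ∀ j ∈ I, i ≠ j →
    cpair (R.simple i) (R.simple j) = 0 ∨ cpair (R.simple i) (R.simple j) = -1

end RootSystemData

variable {ℓ : ℕ}

/-- The Cartan matrix of type F₄ (Bourbaki numbering). -/
def F4Cartan : Fin 4 → Fin 4 → ℝ :=
  ![![2, -1, 0, 0], ![-1, 2, -1, 0], ![0, -2, 2, -1], ![0, 0, -1, 2]]

/-- `R` is of type F₄. -/
def RootSystemData.IsF4 (R : RootSystemData ℓ E) : Prop :=
  ∃ e : Fin 4 ≃o Fin ℓ, ∀ a b : Fin 4,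
    cpair (R.simple (e b)) (R.simple (e a)) = F4Cartan a b


/-!
Write `x_i = ⟨x, α_i∨⟩` and let `(x, y)` be `(λ, μ)` or `(μ, λ)`. If `θ = ∑_{k ∈ K} α_k` is a
nonempty sum of distinct simple roots with `⟨θ, α_m∨⟩ ≤ x_m` for all `m`, then `x - θ < x` is
dominant and still `ν ≤ (x - θ) + y`, because `θ ≤ ∑ αᵢ ≤ λ + μ - ν`: this contradicts
lowness. Taking `K = {i}` gives `x_i ∈ {0, 1}`. If `x_i = x_j = 1` for `i ≠ j` in a connected
simply laced subdiagram, let `K` be a smallest connected subdiagram through `i` and `j`; on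
`K`, `⟨θ, α_m∨⟩ = 2 - #neighbours`, and only `i`, `j` can be leaves (any other leaf could be
removed), so again `⟨θ, α_m∨⟩ ≤ x_m`. Hence `∑_{i ∈ I} x_i ≤ 1` on every connected simply laced
`I`, and as `ν` is dominant, `max(⟨λ + μ - ν, α_i∨⟩, 0) ≤ λ_i + μ_i`. This bounds the sum over
`I₀`, and in type F₄ the sums over the two `A₂`'s `{1, 2}` and `{3, 4}`.
-/

open scoped Finset

lemma cpair_add_left (x y α : E) : cpair (x + y) α = cpair x α + cpair y α := by
  unfold cpair; rw [inner_add_left]; ring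

lemma cpair_sub_left (x y α : E) : cpair (x - y) α = cpair x α - cpair y α := by
  unfold cpair; rw [inner_sub_left]; ring

lemma cpair_sum_left {ι : Type*} (s : Finset ι) (v : ι → E) (α : E) :
    cpair (∑ k ∈ s, v k) α = ∑ k ∈ s, cpair (v k) α := by
  unfold cpair; rw [sum_inner, Finset.mul_sum, Finset.sum_div]

lemma cpair_self {α : E} (hα : α ≠ 0) : cpair α α = 2 := by
  rw [cpair, mul_div_assoc, div_self (inner_self_ne_zero.mpr hα), mul_one]

lemma cpair_eq_zero_iff {x α : E} (hα : α ≠ 0) : cpair x α = 0 ↔ ⟪x, α⟫ = 0 := by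
  simp [cpair, hα]

namespace RootSystemData

variable (R : RootSystemData ℓ E)

def IsLowSummand (x y nu : E) : Prop :=
  R.IsDominant x ∧
  (∀ x', R.IsDominant x' → R.wle x' x → R.wle nu (x' + y) → x' = x) ∧
  R.wle (nu + ∑ i, R.simple i) (x + y)

def neighbors (J : Finset (Fin ℓ)) (m : Fin ℓ) : Finset (Fin ℓ) :=
  (J.erase m).filter fun k => ⟪R.simple k, R.simple m⟫ ≠ 0

variable {R}

lemma simple_ne_zero (i : Fin ℓ) : R.simple i ≠ 0 :=
  R.root_ne_zero _ (R.simple_mem i)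

lemma coeff_nonneg_or_nonpos_of_mem_roots {r : E} (hr : r ∈ R.roots) {f : Fin ℓ → ℝ}
    (hf : r = ∑ m, f m • R.simple m) : (∀ m, 0 ≤ f m) ∨ (∀ m, f m ≤ 0) := by
  have coeff_eq := Fintype.linearIndependent_iffₛ.mp R.simple_indep f
  rcases R.root_decomp r hr with ⟨c, hc⟩ | ⟨c, hc⟩
  · refine Or.inl fun m => ?_
    rw [coeff_eq (fun m => (c m : ℝ)) (hf ▸ hc) m]
    positivity
  · refine Or.inr fun m => ?_
    rw [coeff_eq (fun m => -(c m : ℝ))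
      (by simp only [neg_smul, Finset.sum_neg_distrib, ← hf, hc]) m]
    simp

lemma cpair_simple_nonpos {i j : Fin ℓ} (hij : i ≠ j) :
    cpair (R.simple i) (R.simple j) ≤ 0 := by
  set c := cpair (R.simple i) (R.simple j)
  have hrefl : wrefl (R.simple j) (R.simple i) =
      ∑ m, ((if m = i then 1 else 0) - (if m = j then c else 0)) • R.simple m := by
    simp [wrefl, c, sub_smul, Finset.sum_sub_distrib, ite_smul]
  rcases coeff_nonneg_or_nonpos_of_mem_roots
      (R.reflect_mem _ (R.simple_mem j) _ (R.simple_mem i)) hrefl with h | h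
  · simpa [hij.symm] using h j
  · exact absurd (h i) (by simp [hij])

lemma cpair_sum_simple_nonpos {J : Finset (Fin ℓ)} {m : Fin ℓ} (hm : m ∉ J) :
    cpair (∑ k ∈ J, R.simple k) (R.simple m) ≤ 0 := by
  rw [cpair_sum_left]
  exact Finset.sum_nonpos fun k hk => cpair_simple_nonpos (ne_of_mem_of_not_mem hk hm)

lemma isIntegral_sum_simple (J : Finset (Fin ℓ)) : R.IsIntegral (∑ k ∈ J, R.simple k) := by
  intro α hα
  choose z hz using fun k => R.cpair_int α hα _ (R.simple_mem k)
  refine ⟨∑ k ∈ J, z k, ?_⟩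
  rw [cpair_sum_left]
  push_cast
  exact Finset.sum_congr rfl fun k _ => hz k

lemma wle_refl (x : E) : R.wle x x :=
  ⟨0, by simp⟩

lemma wle_trans {x y z : E} (hxy : R.wle x y) (hyz : R.wle y z) : R.wle x z := by
  obtain ⟨c, hc⟩ := hxy
  obtain ⟨d, hd⟩ := hyz
  refine ⟨c + d, ?_⟩
  rw [← sub_add_sub_cancel z y x, hc, hd, ← Finset.sum_add_distrib]
  simp [add_smul, add_comm]

lemma wle_add_sum_simple (x : E) (J : Finset (Fin ℓ)) :
    R.wle x (x + ∑ k ∈ J, R.simple k) :=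
  ⟨fun k => if k ∈ J then 1 else 0, by simp [ite_smul, Finset.sum_ite_mem]⟩

lemma wle_sub_sum_simple (x : E) (J : Finset (Fin ℓ)) :
    R.wle (x - ∑ k ∈ J, R.simple k) x := by
  simpa using wle_add_sum_simple (R := R) (x - ∑ k ∈ J, R.simple k) J

lemma LowTriple.isLowSummand_left {lam mu nu : E} (h : R.LowTriple lam mu nu) :
    R.IsLowSummand lam mu nu :=
  ⟨h.1, fun x' hx' hle hnu => (h.2.2.2.1 x' mu hx' h.2.1 hle (wle_refl mu) hnu).1, h.2.2.2.2⟩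

lemma LowTriple.isLowSummand_right {lam mu nu : E} (h : R.LowTriple lam mu nu) :
    R.IsLowSummand mu lam nu := by
  refine ⟨h.2.1, fun x' hx' hle hnu => ?_, by rw [add_comm mu]; exact h.2.2.2.2⟩
  exact (h.2.2.2.1 lam x' h.1 hx' (wle_refl lam) hle (by rwa [add_comm])).2

lemma IsLowSummand.eq_empty_of_cpair_sum_simple_le {x y nu : E} (hx : R.IsLowSummand x y nu)
    {J : Finset (Fin ℓ)}
    (hle : ∀ m, cpair (∑ k ∈ J, R.simple k) (R.simple m) ≤ cpair x (R.simple m)) :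
    J = ∅ := by
  set θ := ∑ k ∈ J, R.simple k
  have hdom : R.IsDominant (x - θ) := by
    refine ⟨fun α hα => ?_, fun m => by rw [cpair_sub_left]; linarith [hle m]⟩
    obtain ⟨a, ha⟩ := hx.1.1 α hα
    obtain ⟨b, hb⟩ := isIntegral_sum_simple J α hα
    exact ⟨a - b, by rw [cpair_sub_left, ha, hb]; push_cast; rfl⟩
  have hnu : R.wle nu (x - θ + y) := by
    obtain ⟨c, hc⟩ := hx.2.2
    refine wle_trans (wle_add_sum_simple nu Jᶜ) ⟨c, ?_⟩
    rw [← hc, ← Finset.sum_add_sum_compl J]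
    abel
  have hθ : θ = 0 := sub_eq_self.mp (hx.2.1 _ hdom (wle_sub_sum_simple x J) hnu)
  by_contra hne
  obtain ⟨k, hk⟩ := Finset.nonempty_iff_ne_empty.mpr hne
  have := Fintype.linearIndependent_iff.mp R.simple_indep (fun m => if m ∈ J then 1 else 0)
    (by simpa [ite_smul, Finset.sum_ite_mem] using hθ) k
  simp [hk] at this

lemma IsLowSummand.cpair_simple_eq_zero_or_one {x y nu : E} (hx : R.IsLowSummand x y nu)
    (i : Fin ℓ) : cpair x (R.simple i) = 0 ∨ cpair x (R.simple i) = 1 := by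
  obtain ⟨z, hz⟩ := hx.1.1 _ (R.simple_mem i)
  have hz0 : 0 ≤ z := by exact_mod_cast hz ▸ hx.1.2 i
  have hz1 : z ≤ 1 := by
    by_contra hz2
    have := hx.eq_empty_of_cpair_sum_simple_le (J := {i}) fun m => by
      rw [Finset.sum_singleton]
      by_cases hm : m = i
      · rw [hm, cpair_self (simple_ne_zero i), hz]
        exact_mod_cast (show 2 ≤ z by omega)
      · exact (cpair_simple_nonpos (Ne.symm hm)).trans (hx.1.2 m)
    simp at this
  rw [hz]
  interval_cases z <;> simp

lemma inner_eq_zero_of_notMem_neighbors {J : Finset (Fin ℓ)} {m k : Fin ℓ} (hk : k ∈ J)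
    (hkm : k ≠ m) (hnb : k ∉ R.neighbors J m) : ⟪R.simple m, R.simple k⟫ = 0 := by
  rw [real_inner_comm]
  simpa [neighbors, hk, hkm] using hnb

lemma SimplyLaced.mono {I J : Finset (Fin ℓ)} (hJ : R.SimplyLaced J) (hIJ : I ⊆ J) :
    R.SimplyLaced I :=
  fun i hi j hj => hJ i (hIJ hi) j (hIJ hj)

lemma SimplyLaced.cpair_sum_simple {J : Finset (Fin ℓ)} (hJ : R.SimplyLaced J) {m : Fin ℓ}
    (hm : m ∈ J) :
    cpair (∑ k ∈ J, R.simple k) (R.simple m) = 2 - #(R.neighbors J m) := by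
  rw [cpair_sum_left, ← Finset.add_sum_erase J _ hm, cpair_self (simple_ne_zero m),
    neighbors, Finset.card_filter, sub_eq_add_neg]
  push_cast
  rw [← Finset.sum_neg_distrib]
  refine congrArg _ (Finset.sum_congr rfl fun k hk => ?_)
  obtain ⟨hkm, hk⟩ := Finset.mem_erase.mp hk
  rcases hJ k hk m hm hkm with h | h <;> simp [h, ← cpair_eq_zero_iff (simple_ne_zero m)]

lemma simplyLaced_pair {a b : Fin ℓ} (hab : cpair (R.simple a) (R.simple b) = -1)
    (hba : cpair (R.simple b) (R.simple a) = -1) : R.SimplyLaced {a, b} := by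
  intro i hi j hj hij
  simp only [Finset.mem_insert, Finset.mem_singleton] at hi hj
  rcases hi with rfl | rfl <;> rcases hj with rfl | rfl <;> simp_all

lemma connected_pair {a b : Fin ℓ} (hab : ⟪R.simple a, R.simple b⟫ ≠ 0) :
    R.Connected {a, b} := by
  refine ⟨Finset.insert_nonempty a {b}, fun S hS ⟨s, hs⟩ hsep => ?_⟩
  have haS : a ∈ S := by
    by_contra haS
    obtain rfl : s = b := by
      rcases Finset.mem_insert.mp (hS hs) with rfl | h
      · exact absurd hs haS
      · exact Finset.mem_singleton.mp h
    exact hab (by rw [real_inner_comm]; exact hsep s hs a (Finset.mem_insert_self a {s}) haS)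
  have hbS : b ∈ S := by
    by_contra hbS
    exact hab (hsep a haS b (Finset.mem_insert_of_mem (Finset.mem_singleton_self b)) hbS)
  exact hS.antisymm (Finset.insert_subset haS (Finset.singleton_subset_iff.mpr hbS))

lemma Connected.neighbors_nonempty {J : Finset (Fin ℓ)} (hJ : R.Connected J) {m : Fin ℓ}
    (hm : m ∈ J) (hJm : J ≠ {m}) : (R.neighbors J m).Nonempty := by
  by_contra hnb
  refine hJm (hJ.2 {m} (Finset.singleton_subset_iff.mpr hm) (Finset.singleton_nonempty m)
    fun i hi k hk hkS => ?_).symm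
  rw [Finset.mem_singleton.mp hi]
  exact inner_eq_zero_of_notMem_neighbors hk (Finset.notMem_singleton.mp hkS)
    fun h => hnb ⟨k, h⟩

lemma Connected.erase {J : Finset (Fin ℓ)} (hJ : R.Connected J) {m : Fin ℓ} (hm : m ∈ J)
    (hleaf : #(R.neighbors J m) ≤ 1) (hne : (J.erase m).Nonempty) :
    R.Connected (J.erase m) := by
  refine ⟨hne, fun S hS hSne hsep => ?_⟩
  have hmS : m ∉ S := fun h => by simpa using hS h
  by_cases hn : ∃ n ∈ R.neighbors J m, n ∈ S
  · obtain ⟨n, hn, hnS⟩ := hn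
    have hins : insert m S = J := by
      refine hJ.2 _ (Finset.insert_subset hm (hS.trans (Finset.erase_subset m J)))
        (Finset.insert_nonempty m S) fun i hi k hk hkS => ?_
      obtain ⟨hkm, hkS'⟩ := not_or.mp (Finset.mem_insert.not.mp hkS)
      rcases Finset.mem_insert.mp hi with rfl | hi
      · refine inner_eq_zero_of_notMem_neighbors hk hkm fun hk' => hkS' ?_
        rwa [Finset.card_le_one.mp hleaf k hk' n hn]
      · exact hsep i hi k (Finset.mem_erase.mpr ⟨hkm, hk⟩) hkS'
    rw [← hins, Finset.erase_insert hmS]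
  · push Not at hn
    have hSJ : S = J := hJ.2 S (hS.trans (Finset.erase_subset m J)) hSne fun i hi k hk hkS => by
      by_cases hkm : k = m
      · subst hkm
        rw [real_inner_comm]
        exact inner_eq_zero_of_notMem_neighbors (Finset.mem_of_mem_erase (hS hi))
          (Finset.ne_of_mem_erase (hS hi)) fun h => hn i h hi
      · exact hsep i hi k (Finset.mem_erase.mpr ⟨hkm, hk⟩) hkS
    exact absurd (hSJ ▸ hm) hmS

lemma Connected.exists_subset_two_le_card_neighbors {J : Finset (Fin ℓ)} (hJ : R.Connected J)
    {i j : Fin ℓ} (hi : i ∈ J) (hj : j ∈ J) :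
    ∃ K ⊆ J, i ∈ K ∧ j ∈ K ∧ R.Connected K ∧
      ∀ m ∈ K, m ≠ i → m ≠ j → 2 ≤ #(R.neighbors K m) := by
  classical
  set F := J.powerset.filter fun K => i ∈ K ∧ j ∈ K ∧ R.Connected K
  obtain ⟨K, hKF, hmin⟩ := F.exists_min_image Finset.card
    ⟨J, Finset.mem_filter.mpr ⟨Finset.mem_powerset_self J, hi, hj, hJ⟩⟩
  obtain ⟨hKJ, hiK, hjK, hK⟩ := Finset.mem_filter.mp hKF
  refine ⟨K, Finset.mem_powerset.mp hKJ, hiK, hjK, hK, fun m hm hmi hmj => ?_⟩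
  by_contra hleaf
  have hKm : K.erase m ∈ F := Finset.mem_filter.mpr
    ⟨Finset.mem_powerset.mpr ((K.erase_subset m).trans (Finset.mem_powerset.mp hKJ)),
      Finset.mem_erase.mpr ⟨hmi.symm, hiK⟩, Finset.mem_erase.mpr ⟨hmj.symm, hjK⟩,
      hK.erase hm (by omega) ⟨i, Finset.mem_erase.mpr ⟨hmi.symm, hiK⟩⟩⟩
  exact (Finset.card_erase_lt_of_mem hm).not_ge (hmin _ hKm)

lemma IsLowSummand.eq_of_one_le_cpair_simple {x y nu : E} (hx : R.IsLowSummand x y nu)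
    {J : Finset (Fin ℓ)} (hJ : R.Connected J) (hSL : R.SimplyLaced J)
    {i j : Fin ℓ} (hi : i ∈ J) (hj : j ∈ J)
    (hxi : 1 ≤ cpair x (R.simple i)) (hxj : 1 ≤ cpair x (R.simple j)) : i = j := by
  by_contra hij
  obtain ⟨K, hKJ, hiK, hjK, hK, hpath⟩ := hJ.exists_subset_two_le_card_neighbors hi hj
  have hend : ∀ m ∈ K, m = i ∨ m = j → (1 : ℝ) ≤ #(R.neighbors K m) := by
    intro m hm _
    refine Nat.one_le_cast.mpr (Finset.card_pos.mpr (hK.neighbors_nonempty hm fun hKm => hij ?_))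
    rw [hKm, Finset.mem_singleton] at hiK hjK
    rw [hiK, hjK]
  refine Finset.ne_empty_of_mem hiK (hx.eq_empty_of_cpair_sum_simple_le fun m => ?_)
  by_cases hm : m ∈ K
  · rw [(hSL.mono hKJ).cpair_sum_simple hm]
    by_cases hmij : m = i ∨ m = j
    · have := hend m hm hmij
      rcases hmij with rfl | rfl <;> linarith
    · push Not at hmij
      have : (2 : ℝ) ≤ #(R.neighbors K m) := by exact_mod_cast hpath m hm hmij.1 hmij.2
      linarith [hx.1.2 m]
  · exact (cpair_sum_simple_nonpos hm).trans (hx.1.2 m)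

lemma IsLowSummand.sum_cpair_simple_le_one {x y nu : E} (hx : R.IsLowSummand x y nu)
    {J : Finset (Fin ℓ)} (hJ : R.Connected J) (hSL : R.SimplyLaced J) :
    ∑ i ∈ J, cpair x (R.simple i) ≤ 1 := by
  by_contra hgt
  obtain ⟨i, hi, hxi⟩ := Finset.exists_ne_zero_of_sum_ne_zero (by linarith : _ ≠ (0 : ℝ))
  have hxi : cpair x (R.simple i) = 1 := (hx.cpair_simple_eq_zero_or_one i).resolve_left hxi
  rw [← Finset.add_sum_erase J _ hi, hxi] at hgt
  obtain ⟨j, hj, hxj⟩ := Finset.exists_ne_zero_of_sum_ne_zero (by linarith : _ ≠ (0 : ℝ))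
  have hxj : cpair x (R.simple j) = 1 := (hx.cpair_simple_eq_zero_or_one j).resolve_left hxj
  obtain ⟨hji, hj⟩ := Finset.mem_erase.mp hj
  exact hji (hx.eq_of_one_le_cpair_simple hJ hSL hi hj hxi.ge hxj.ge).symm

lemma LowTriple.sum_max_cpair_sub_le_two {lam mu nu : E} (h : R.LowTriple lam mu nu)
    {J : Finset (Fin ℓ)} (hJ : R.Connected J) (hSL : R.SimplyLaced J) :
    ∑ i ∈ J, max (cpair (lam + mu - nu) (R.simple i)) 0 ≤ 2 :=
  calc ∑ i ∈ J, max (cpair (lam + mu - nu) (R.simple i)) 0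
      ≤ ∑ i ∈ J, (cpair lam (R.simple i) + cpair mu (R.simple i)) :=
        Finset.sum_le_sum fun i _ => by
          rw [cpair_sub_left, cpair_add_left]
          exact max_le (by linarith [h.2.2.1.2 i]) (by linarith [h.1.2 i, h.2.1.2 i])
    _ ≤ 1 + 1 := by
        rw [Finset.sum_add_distrib]
        exact add_le_add (h.isLowSummand_left.sum_cpair_simple_le_one hJ hSL)
          (h.isLowSummand_right.sum_cpair_simple_le_one hJ hSL)
    _ = 2 := by norm_num

end RootSystemData

theorem statement4_general (R : RootSystemData ℓ E)
    (lam mu nu : E) (hLT : R.LowTriple lam mu nu)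
    (I0 : Finset (Fin ℓ))
    (hSL : R.SimplyLaced I0) (hConn : R.Connected I0) :
    (¬ R.IsF4 →
      ∑ i ∈ I0, max (cpair (lam + mu - nu) (R.simple i)) 0 ≤ 2) ∧
    (∀ e : Fin 4 ≃o Fin ℓ,
      (∀ a b : Fin 4, cpair (R.simple (e b)) (R.simple (e a)) = F4Cartan a b) →
      max (max (cpair (lam + mu - nu) (R.simple (e 0))) 0 +
            max (cpair (lam + mu - nu) (R.simple (e 1))) 0)
          (max (cpair (lam + mu - nu) (R.simple (e 2))) 0 +
            max (cpair (lam + mu - nu) (R.simple (e 3))) 0) ≤ 2) := by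
  refine ⟨fun _ => hLT.sum_max_cpair_sub_le_two hConn hSL, fun e he => ?_⟩
  have hA2 : ∀ a b : Fin 4, a ≠ b → F4Cartan a b = -1 → F4Cartan b a = -1 →
      max (cpair (lam + mu - nu) (R.simple (e a))) 0 +
        max (cpair (lam + mu - nu) (R.simple (e b))) 0 ≤ 2 := by
    intro a b hab hcab hcba
    have hab' : cpair (R.simple (e a)) (R.simple (e b)) = -1 := by rw [he b a, hcba]
    have hba' : cpair (R.simple (e b)) (R.simple (e a)) = -1 := by rw [he a b, hcab]
    have hinner : ⟪R.simple (e a), R.simple (e b)⟫ ≠ 0 := fun h0 => by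
      rw [(cpair_eq_zero_iff (RootSystemData.simple_ne_zero _)).mpr h0] at hab'
      norm_num at hab'
    simpa only [Finset.sum_pair (e.injective.ne hab)] using hLT.sum_max_cpair_sub_le_two
      (RootSystemData.connected_pair hinner) (RootSystemData.simplyLaced_pair hab' hba')
  exact max_le (hA2 0 1 (by decide) (by simp [F4Cartan]) (by simp [F4Cartan]))
    (hA2 2 3 (by decide) (by simp [F4Cartan]) (by simp [F4Cartan]))

/-- If `(λ,μ,ν)` is a low triple then `ht₀⁺(λ+μ-ν) ≤ 2`, where the positive part
of the height is taken over the maximal simply laced subdiagram `I₀` containing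
node 1 (with the max-of-the-two-sums convention in type F₄); here the
fundamental-weight coefficients of `β` are `a_i = ⟨β, α_i∨⟩`. -/
theorem statement4 (hℓ : 0 < ℓ) (R : RootSystemData ℓ E)
    (lam mu nu : E) (hLT : R.LowTriple lam mu nu)
    (I0 : Finset (Fin ℓ)) (h0 : (⟨0, hℓ⟩ : Fin ℓ) ∈ I0)
    (hSL : R.SimplyLaced I0) (hConn : R.Connected I0)
    (hmax : ∀ S : Finset (Fin ℓ), I0 ⊆ S → (⟨0, hℓ⟩ : Fin ℓ) ∈ S →
      R.SimplyLaced S → R.Connected S → S = I0) :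
    (¬ R.IsF4 →
      ∑ i ∈ I0, max (cpair (lam + mu - nu) (R.simple i)) 0 ≤ 2) ∧
    (∀ e : Fin 4 ≃o Fin ℓ,
      (∀ a b : Fin 4, cpair (R.simple (e b)) (R.simple (e a)) = F4Cartan a b) →
      max (max (cpair (lam + mu - nu) (R.simple (e 0))) 0 +
            max (cpair (lam + mu - nu) (R.simple (e 1))) 0)
          (max (cpair (lam + mu - nu) (R.simple (e 2))) 0 +
            max (cpair (lam + mu - nu) (R.simple (e 3))) 0) ≤ 2) :=
  statement4_general R lam mu nu hLT I0 hSL hConn
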